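/- arXiv:2508.19907 — 2 statements merged into one kernel-verified Lean document; each statement's English description precedes it below -/
import Mathlib

section
/- Let n ≥ 1, let U be a real orthogonal n×n matrix (Uᵀ U = I), let Λ be a real diagonal n×n matrix, and let Y be any real n×n matrix. Let 𝓕 be any set of functions ℝ → ℝ and write g(Λ) for the diagonal matrix with entries g(Λ_{ii}). Then a function g* ∈ 𝓕 minimizes ‖U g(Λ) Uᵀ − Y‖_F over 𝓕 if and only if g* minimizes ∑_{i=1}^n ( g(Λ_{ii}) − U_{·,i}ᵀ Y U_{·,i} )² over 𝓕, where U_{·,i} denotes the i-th column of U. (Note that U_{·,i}ᵀ Y U_{·,i} = (Uᵀ Y U)_{ii}.) -/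
open Matrix

private lemma frob_eq_trace {n : ℕ} (M : Matrix (Fin n) (Fin n) ℝ) :
    ∑ i, ∑ j, (M i j) ^ 2 = Matrix.trace (Mᵀ * M) := by
  simp only [Matrix.trace, Matrix.diag, Matrix.mul_apply, Matrix.transpose_apply, sq]
  rw [Finset.sum_comm]

private lemma frob_conj {n : ℕ} (U A : Matrix (Fin n) (Fin n) ℝ) (hU : Uᵀ * U = 1) :
    ∑ i, ∑ j, ((U * A * Uᵀ) i j) ^ 2 = ∑ i, ∑ j, (A i j) ^ 2 := by
  rw [frob_eq_trace, frob_eq_trace]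
  have h1 : (U * A * Uᵀ)ᵀ * (U * A * Uᵀ) = U * (Aᵀ * A) * Uᵀ := by
    have : (U * A * Uᵀ)ᵀ = U * Aᵀ * Uᵀ := by
      simp [Matrix.transpose_mul, Matrix.mul_assoc]
    rw [this]
    calc U * Aᵀ * Uᵀ * (U * A * Uᵀ)
        = U * Aᵀ * (Uᵀ * U) * (A * Uᵀ) := by
          simp only [Matrix.mul_assoc]
      _ = U * (Aᵀ * A) * Uᵀ := by rw [hU]; simp [Matrix.mul_assoc]
  rw [h1, Matrix.trace_mul_comm, ← Matrix.mul_assoc, hU, Matrix.one_mul]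

/-- **Lemma 4.1.** With `U` orthogonal and `Λ = diag(lam)`, a function `g* ∈ 𝓕` minimizes the
Frobenius distance `‖U g(Λ) Uᵀ - Y‖_F` over `𝓕` iff it minimizes the least-squares objective
`∑ᵢ (g(Λᵢᵢ) - U_{·,i}ᵀ Y U_{·,i})²` over `𝓕`. -/
theorem stmt_3 (n : ℕ) (hn : 1 ≤ n) (U Y : Matrix (Fin n) (Fin n) ℝ) (lam : Fin n → ℝ)
    (hU : Uᵀ * U = 1) (𝓕 : Set (ℝ → ℝ)) (gstar : ℝ → ℝ) (hgstar : gstar ∈ 𝓕) :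
    (∀ g ∈ 𝓕,
        Real.sqrt (∑ i, ∑ j,
            ((U * Matrix.diagonal (fun i => gstar (lam i)) * Uᵀ - Y) i j) ^ 2) ≤
        Real.sqrt (∑ i, ∑ j,
            ((U * Matrix.diagonal (fun i => g (lam i)) * Uᵀ - Y) i j) ^ 2)) ↔
    (∀ g ∈ 𝓕,
        (∑ i, (gstar (lam i) - ∑ a, ∑ b, U a i * Y a b * U b i) ^ 2) ≤
        (∑ i, (g (lam i) - ∑ a, ∑ b, U a i * Y a b * U b i) ^ 2)) := by
  have hUUT : U * Uᵀ = 1 := mul_eq_one_comm.mp hU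
  set B := Uᵀ * Y * U with hBdef
  -- diagonal entries of B are the quadratic forms
  have hBdiag : ∀ i, B i i = ∑ a, ∑ b, U a i * Y a b * U b i := by
    intro i
    simp only [hBdef, Matrix.mul_apply, Matrix.transpose_apply, Finset.sum_mul]
    rw [Finset.sum_comm]
  set C : ℝ := ∑ i, ∑ j ∈ Finset.univ.erase i, (B i j) ^ 2 with hCdef
  have hC : 0 ≤ C := Finset.sum_nonneg fun i _ =>
    Finset.sum_nonneg fun j _ => sq_nonneg _
  -- the key identity
  have key : ∀ h : Fin n → ℝ,
      ∑ i, ∑ j, ((U * Matrix.diagonal h * Uᵀ - Y) i j) ^ 2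
        = (∑ i, (h i - B i i) ^ 2) + C := by
    intro h
    have hfac : U * Matrix.diagonal h * Uᵀ - Y = U * (Matrix.diagonal h - B) * Uᵀ := by
      have : U * B * Uᵀ = Y := by
        calc U * (Uᵀ * Y * U) * Uᵀ = (U * Uᵀ) * Y * (U * Uᵀ) := by
              simp only [Matrix.mul_assoc]
          _ = Y := by rw [hUUT]; simp
      rw [Matrix.mul_sub, Matrix.sub_mul, this]
    rw [hfac, frob_conj _ _ hU]
    have : ∀ i, ∑ j, ((Matrix.diagonal h - B) i j) ^ 2
        = (h i - B i i) ^ 2 + ∑ j ∈ Finset.univ.erase i, (B i j) ^ 2 := by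
      intro i
      rw [← Finset.add_sum_erase _ _ (Finset.mem_univ i)]
      congr 1
      · simp [Matrix.sub_apply, Matrix.diagonal_apply_eq]
      · apply Finset.sum_congr rfl
        intro j hj
        have hji : i ≠ j := fun e => (Finset.mem_erase.mp hj).1 e.symm
        simp [Matrix.sub_apply, Matrix.diagonal_apply_ne _ hji]
    calc ∑ i, ∑ j, ((Matrix.diagonal h - B) i j) ^ 2
        = ∑ i, ((h i - B i i) ^ 2 + ∑ j ∈ Finset.univ.erase i, (B i j) ^ 2) :=
          Finset.sum_congr rfl fun i _ => this i
      _ = (∑ i, (h i - B i i) ^ 2) + C := by rw [Finset.sum_add_distrib]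
  constructor <;> intro H g hg <;> have Hg := H g hg
  · have h1 := key (fun i => gstar (lam i))
    have h2 := key (fun i => g (lam i))
    rw [h1, h2] at Hg
    beta_reduce at Hg
    have hnn : 0 ≤ (∑ i, (g (lam i) - B i i) ^ 2) + C :=
      add_nonneg (Finset.sum_nonneg fun i _ => sq_nonneg _) hC
    have h3 := (Real.sqrt_le_sqrt_iff hnn).mp Hg
    have h4 := (add_le_add_iff_right C).mp h3
    calc ∑ i, (gstar (lam i) - ∑ a, ∑ b, U a i * Y a b * U b i) ^ 2
        = ∑ i, (gstar (lam i) - B i i) ^ 2 := by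
          exact Finset.sum_congr rfl fun i _ => by rw [hBdiag]
      _ ≤ ∑ i, (g (lam i) - B i i) ^ 2 := h4
      _ = ∑ i, (g (lam i) - ∑ a, ∑ b, U a i * Y a b * U b i) ^ 2 :=
          Finset.sum_congr rfl fun i _ => by rw [hBdiag]
  · rw [key, key]
    apply Real.sqrt_le_sqrt
    apply (add_le_add_iff_right C).mpr
    calc ∑ i, (gstar (lam i) - B i i) ^ 2
        = ∑ i, (gstar (lam i) - ∑ a, ∑ b, U a i * Y a b * U b i) ^ 2 :=
          Finset.sum_congr rfl fun i _ => by rw [hBdiag]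
      _ ≤ ∑ i, (g (lam i) - ∑ a, ∑ b, U a i * Y a b * U b i) ^ 2 := Hg
      _ = ∑ i, (g (lam i) - B i i) ^ 2 :=
          Finset.sum_congr rfl fun i _ => by rw [hBdiag]
end

section
/- Let M be a real symmetric n×n matrix, let λ_1 ≤ λ_2 ≤ … ≤ λ_n be its eigenvalues listed in nondecreasing order with multiplicity, and let 1 ≤ d ≤ n. Then ∑_{i=1}^d λ_i is the least element of the set { trace(Xᵀ M X) : X ∈ ℝ^{n×d}, Xᵀ X = I_d }; that is, trace(Xᵀ M X) ≥ ∑_{i=1}^d λ_i for every X ∈ ℝ^{n×d} with orthonormal columns, and this bound is attained (e.g., by taking the columns of X to be orthonormal eigenvectors for λ_1, …, λ_d). -/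
open Matrix Finset

lemma KF_key (n d : ℕ) (hd : 1 ≤ d) (hdn : d ≤ n) (lam : Fin n → ℝ) (hmono : Monotone lam)
    (s : Fin n → ℝ) (hs0 : ∀ i, 0 ≤ s i) (hs1 : ∀ i, s i ≤ 1)
    (hsum : ∑ i, s i = d) :
    ∑ i : Fin d, lam (Fin.castLE hdn i) ≤ ∑ i, lam i * s i := by
  have hn : 1 ≤ n := hd.trans hdn
  set c : ℝ := lam ⟨d - 1, by omega⟩ with hc
  set χ : Fin n → ℝ := fun i => if (i : ℕ) < d then 1 else 0 with hχ
  -- sum of chi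
  have hrange : ∀ f : ℕ → ℝ, ∑ k ∈ Finset.range n, (if k < d then f k else 0)
      = ∑ k ∈ Finset.range d, f k := by
    intro f
    rw [← Finset.sum_subset (Finset.range_subset_range.2 hdn)
      (fun x _ hx => by have := Finset.mem_range.not.1 hx; rw [if_neg]; omega)]
    exact Finset.sum_congr rfl fun x hx => if_pos (Finset.mem_range.1 hx)
  have hχsum : ∑ i, χ i = (d : ℝ) := by
    have := Fin.sum_univ_eq_sum_range (fun k => if k < d then (1:ℝ) else 0) n
    simp only [hχ]
    rw [this, hrange]
    simp
  set g : ℕ → ℝ := fun k => if h : k < n then lam ⟨k, h⟩ else 0 with hg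
  have hlamχ : ∑ i, lam i * χ i = ∑ i : Fin d, lam (Fin.castLE hdn i) := by
    have h1 : ∑ i, lam i * χ i = ∑ k ∈ Finset.range n, (if k < d then g k else 0) := by
      rw [← Fin.sum_univ_eq_sum_range (fun k => if k < d then g k else 0) n]
      refine Finset.sum_congr rfl fun i _ => ?_
      simp only [hχ, hg, mul_ite, mul_one, mul_zero, i.isLt, dif_pos]
    have h2 : ∑ i : Fin d, lam (Fin.castLE hdn i) = ∑ k ∈ Finset.range d, g k := by
      rw [← Fin.sum_univ_eq_sum_range g d]
      refine Finset.sum_congr rfl fun i _ => ?_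
      have hin : (i : ℕ) < n := lt_of_lt_of_le i.isLt hdn
      simp only [hg, hin, dif_pos]
      rfl
    rw [h1, hrange, h2]
  have hterm : ∀ i, 0 ≤ (lam i - c) * (s i - χ i) := by
    intro i
    rcases lt_or_ge (i : ℕ) d with h | h
    · have h1 : lam i ≤ c := hmono (by simp [Fin.le_def]; omega)
      have h2 : χ i = 1 := if_pos h
      nlinarith [hs1 i]
    · have h1 : c ≤ lam i := hmono (by simp [Fin.le_def]; omega)
      have h2 : χ i = 0 := if_neg (by omega)
      nlinarith [hs0 i]
  have expand : ∀ i ∈ Finset.univ, lam i * s i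
      = (lam i - c) * (s i - χ i) + lam i * χ i + c * s i - c * χ i := fun i _ => by ring
  rw [Finset.sum_congr rfl expand]
  rw [Finset.sum_sub_distrib, Finset.sum_add_distrib, Finset.sum_add_distrib,
    ← Finset.mul_sum, ← Finset.mul_sum, hsum, hχsum, hlamχ]
  have : 0 ≤ ∑ i, (lam i - c) * (s i - χ i) := Finset.sum_nonneg fun i _ => hterm i
  linarith


/-- **Ky Fan's trace minimization principle (Theorem 4.3).**
Let `M` be a real symmetric `n × n` matrix with eigenvalues `lam 0 ≤ lam 1 ≤ … ≤ lam (n-1)`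
listed in nondecreasing order with multiplicity (i.e. `M = U (diag lam) Uᵀ` for an orthogonal
`U` and monotone `lam`), and let `1 ≤ d ≤ n`. Then `∑_{i<d} lam i` is the least element of
`{ trace(Xᵀ M X) : X ∈ ℝ^{n×d}, Xᵀ X = I_d }`. -/
theorem stmt_11 (n d : ℕ) (hd : 1 ≤ d) (hdn : d ≤ n)
    (M U : Matrix (Fin n) (Fin n) ℝ) (lam : Fin n → ℝ)
    (hM : M.IsSymm) (hU : Uᵀ * U = 1)
    (hdecomp : M = U * Matrix.diagonal lam * Uᵀ) (hmono : Monotone lam) :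
    IsLeast {t : ℝ | ∃ X : Matrix (Fin n) (Fin d) ℝ, Xᵀ * X = 1 ∧ t = (Xᵀ * M * X).trace}
      (∑ i : Fin d, lam (Fin.castLE hdn i)) := by
  have hUU : U * Uᵀ = 1 := mul_eq_one_comm.mp hU
  constructor
  · -- membership: X = U * E
    set E : Matrix (Fin n) (Fin d) ℝ :=
      Matrix.of fun i j => if i = Fin.castLE hdn j then (1:ℝ) else 0 with hE
    have hEE : Eᵀ * E = 1 := by
      ext j k
      simp only [Matrix.mul_apply, Matrix.transpose_apply, hE, Matrix.of_apply,
        ite_mul, one_mul, zero_mul, Finset.sum_ite_eq', Finset.mem_univ, if_true,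
        Matrix.one_apply, Fin.castLE_inj]
    refine ⟨U * E, ?_, ?_⟩
    · rw [Matrix.transpose_mul, Matrix.mul_assoc, ← Matrix.mul_assoc Uᵀ, hU, Matrix.one_mul,
        hEE]
    · have hXMX : (U * E)ᵀ * M * (U * E) = Eᵀ * (Matrix.diagonal lam * E) := by
        rw [hdecomp, Matrix.transpose_mul]
        calc Eᵀ * Uᵀ * (U * Matrix.diagonal lam * Uᵀ) * (U * E)
            = Eᵀ * ((Uᵀ * U) * Matrix.diagonal lam * (Uᵀ * U) * E) := by
              simp only [Matrix.mul_assoc]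
          _ = Eᵀ * (Matrix.diagonal lam * E) := by
              rw [hU, Matrix.one_mul, Matrix.mul_one]
      rw [hXMX, Matrix.trace]
      refine Finset.sum_congr rfl fun j _ => ?_
      simp [Matrix.diag_apply, Matrix.mul_apply, Matrix.transpose_apply,
          Matrix.diagonal_mul, hE, ite_mul, mul_ite, zero_mul, mul_zero,
          Finset.sum_ite_eq']
  · -- lower bound
    rintro t ⟨X, hX, rfl⟩
    set Y : Matrix (Fin n) (Fin d) ℝ := Uᵀ * X with hYdef
    have hYY : Yᵀ * Y = 1 := by
      rw [hYdef, Matrix.transpose_mul, Matrix.transpose_transpose,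
        Matrix.mul_assoc, ← Matrix.mul_assoc U, hUU, Matrix.one_mul, hX]
    set P : Matrix (Fin n) (Fin n) ℝ := Y * Yᵀ with hPdef
    have hP2 : P * P = P := by
      rw [hPdef, Matrix.mul_assoc, ← Matrix.mul_assoc Yᵀ, hYY, Matrix.one_mul]
    have hPsymm : ∀ i j, P j i = P i j := by
      intro i j
      simp [hPdef, Matrix.mul_apply, Matrix.transpose_apply, mul_comm]
    set s : Fin n → ℝ := fun i => P i i with hs
    have hs0 : ∀ i, 0 ≤ s i := by
      intro i
      simp only [hs, hPdef, Matrix.mul_apply, Matrix.transpose_apply]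
      exact Finset.sum_nonneg fun j _ => mul_self_nonneg _
    have hsq : ∀ i, s i ^ 2 ≤ s i := by
      intro i
      have h1 : s i = ∑ j, P i j ^ 2 := by
        conv_lhs => rw [hs, ← hP2]
        simp only [Matrix.mul_apply]
        exact Finset.sum_congr rfl fun j _ => by rw [hPsymm j i]; ring
      have h2 : P i i ^ 2 ≤ ∑ j, P i j ^ 2 :=
        Finset.single_le_sum (f := fun j => P i j ^ 2)
          (fun j _ => sq_nonneg _) (Finset.mem_univ i)
      conv_rhs => rw [h1]
      exact h2
    have hs1 : ∀ i, s i ≤ 1 := fun i => by nlinarith [hsq i, hs0 i]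
    have hsum : ∑ i, s i = (d : ℝ) := by
      have : ∑ i, s i = P.trace := rfl
      rw [this, hPdef, Matrix.trace_mul_comm, hYY]
      simp
    have htr : (Xᵀ * M * X).trace = ∑ i, lam i * s i := by
      have hXMX : Xᵀ * M * X = Yᵀ * (Matrix.diagonal lam * Y) := by
        rw [hdecomp, hYdef, Matrix.transpose_mul, Matrix.transpose_transpose]
        simp only [Matrix.mul_assoc]
      rw [hXMX, Matrix.trace_mul_comm, Matrix.mul_assoc, ← hPdef]
      simp only [Matrix.trace, Matrix.diag_apply, Matrix.diagonal_mul]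
      rfl
    rw [htr]
    exact KF_key n d hd hdn lam hmono s hs0 hs1 hsum
end
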